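/- arXiv:1203.2889 — 7 statements merged into one kernel-verified Lean document; each statement's English description precedes it below -/
import Mathlib

section
/- Let k be a field of characteristic ≠ 2, V a finite-dimensional k-vector space, and Q a quadratic form on V whose polar form is nondegenerate. Let g be a unit of Cl(V,Q) lying in the even part Cl₊(V,Q) such that g · ι(v) · g⁻¹ ∈ ι(V) for all v ∈ V. Then reverse(g)·g is a scalar: there exists c ∈ k with reverse(g)·g = c·1. (This is the well-definedness of the norm map Nm : CSpin(V) → 𝔾ₘ, g ↦ ι(g)g.) -/
/-!
Put `α = reverse g * g`. Reversing `g ι(v) g⁻¹ = ι(w)` gives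
`reverse g⁻¹ ι(v) reverse g = g ι(v) g⁻¹`, so `α` commutes with every `ι v`; it is also
even, so `involute α = α`. The supercommutator `ι v * x - involute x * ι v` is the
contraction of `x` by `polar(v, ·)`, hence by nondegeneracy every contraction of `α` vanishes.

On a finite free module, an element of the Clifford algebra all of whose contractions vanish is
a scalar: writing `Q(x) = B(x, x)` for a bilinear `B`, Chevalley's change of form
`Cl(Q) ≃ Cl(0)` commutes with contractions and fixes scalars, and in the exterior algebra one
splits off basis vectors `e` one at a time, writing `x = a + e * c` with `a, c` free of `e`;
contracting with the coordinate of `e` gives `c = 0`.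
-/

namespace CliffordAlgebra

section CommRing

variable {R M : Type*} [CommRing R] [AddCommGroup M] [Module R M] {Q : QuadraticForm R M}

theorem contractLeft_mul (d : Module.Dual R M) (x y : CliffordAlgebra Q) :
    contractLeft d (x * y) = contractLeft d x * y + involute x * contractLeft d y := by
  induction x using CliffordAlgebra.induction generalizing y with
  | algebraMap r =>
    rw [contractLeft_algebraMap_mul, contractLeft_algebraMap, zero_mul, zero_add,
      AlgHom.commutes]
  | ι m =>
    rw [contractLeft_ι_mul, contractLeft_ι, involute_ι, Algebra.smul_def, neg_mul,
      sub_eq_add_neg]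
  | mul a b ha hb =>
    rw [mul_assoc, ha, hb, ha, map_mul]
    noncomm_ring
  | add a b ha hb =>
    rw [add_mul, map_add, ha, hb, map_add, map_add, add_mul]
    noncomm_ring

theorem ι_mul_sub_involute_mul_ι (v : M) (x : CliffordAlgebra Q) :
    ι Q v * x - involute x * ι Q v = contractLeft (QuadraticMap.polarBilin Q v) x := by
  induction x using CliffordAlgebra.induction with
  | algebraMap r =>
    rw [contractLeft_algebraMap, AlgHom.commutes, Algebra.commutes, sub_self]
  | ι m =>
    rw [involute_ι, contractLeft_ι, neg_mul, sub_neg_eq_add, ι_mul_ι_add_swap,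
      QuadraticMap.polarBilin_apply_apply]
  | mul a b ha hb =>
    calc ι Q v * (a * b) - involute (a * b) * ι Q v
        = (ι Q v * a - involute a * ι Q v) * b
          + involute a * (ι Q v * b - involute b * ι Q v) := by rw [map_mul]; noncomm_ring
      _ = _ := by rw [ha, hb, contractLeft_mul]
  | add a b ha hb =>
    rw [map_add, map_add, add_mul, mul_add, ← ha, ← hb]
    noncomm_ring

theorem contractLeft_eq_zero_of_mem_adjoin {s : Set M} {d : Module.Dual R M}
    (hd : ∀ m ∈ s, d m = 0) {x : CliffordAlgebra Q} (hx : x ∈ Algebra.adjoin R (ι Q '' s)) :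
    contractLeft d x = 0 := by
  induction hx using Algebra.adjoin_induction with
  | mem _ hz =>
    obtain ⟨m, hm, rfl⟩ := hz
    rw [contractLeft_ι, hd m hm, map_zero]
  | algebraMap r => exact contractLeft_algebraMap (Q := Q) d r
  | add a b _ _ ha hb => rw [map_add, ha, hb, add_zero]
  | mul a b _ _ ha hb => rw [contractLeft_mul, ha, hb, zero_mul, mul_zero, add_zero]

theorem involute_mem_adjoin {s : Set M} {x : CliffordAlgebra Q}
    (hx : x ∈ Algebra.adjoin R (ι Q '' s)) : involute x ∈ Algebra.adjoin R (ι Q '' s) := by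
  suffices Algebra.adjoin R (ι Q '' s) ≤ (Algebra.adjoin R (ι Q '' s)).comap involute from
    this hx
  rw [Algebra.adjoin_le_iff]
  rintro _ ⟨m, hm, rfl⟩
  rw [SetLike.mem_coe, Subalgebra.mem_comap, involute_ι]
  exact neg_mem (Algebra.subset_adjoin (Set.mem_image_of_mem (ι Q) hm))

end CommRing

end CliffordAlgebra

namespace ExteriorAlgebra

open CliffordAlgebra

variable {R M : Type*} [CommRing R] [AddCommGroup M] [Module R M]

theorem ι_mul_eq_involute_mul_ι (m : M) (x : ExteriorAlgebra R M) :
    ι R m * x = involute x * ι R m := by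
  rw [← sub_eq_zero, ι_mul_sub_involute_mul_ι]
  have : QuadraticMap.polarBilin (0 : QuadraticForm R M) m = 0 := by
    ext n; simp [QuadraticMap.polar]
  rw [this, map_zero, LinearMap.zero_apply]

theorem exists_eq_add_ι_mul_of_mem_adjoin_insert {m : M} {s : Set M} {x : ExteriorAlgebra R M}
    (hx : x ∈ Algebra.adjoin R (ι R '' insert m s)) :
    ∃ a ∈ Algebra.adjoin R (ι R '' s), ∃ c ∈ Algebra.adjoin R (ι R '' s),
      x = a + ι R m * c := by
  induction hx using Algebra.adjoin_induction with
  | mem _ hz =>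
    obtain ⟨n, hn | hn, rfl⟩ := hz
    · exact ⟨0, zero_mem _, 1, one_mem _, by rw [hn, zero_add, mul_one]⟩
    · exact ⟨ι R n, Algebra.subset_adjoin ⟨n, hn, rfl⟩, 0, zero_mem _,
        by rw [mul_zero, add_zero]⟩
  | algebraMap r =>
    exact ⟨algebraMap R _ r, algebraMap_mem _ r, 0, zero_mem _, by rw [mul_zero, add_zero]⟩
  | add _ _ _ _ hx hy =>
    obtain ⟨a, ha, c, hc, rfl⟩ := hx
    obtain ⟨a', ha', c', hc', rfl⟩ := hy
    exact ⟨a + a', add_mem ha ha', c + c', add_mem hc hc', by rw [mul_add]; abel⟩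
  | mul _ _ _ _ hx hy =>
    obtain ⟨a, ha, c, hc, rfl⟩ := hx
    obtain ⟨a', ha', c', hc', rfl⟩ := hy
    refine ⟨a * a', mul_mem ha ha', involute a * c' + c * a',
      add_mem (mul_mem (involute_mem_adjoin ha) hc') (mul_mem hc ha'), ?_⟩
    have hc : c * ι R m = ι R m * involute c := by
      rw [ι_mul_eq_involute_mul_ι, involute_involute]
    have ha : a * ι R m = ι R m * involute a := by
      rw [ι_mul_eq_involute_mul_ι, involute_involute]
    calc (a + ι R m * c) * (a' + ι R m * c')
        = a * a' + a * ι R m * c' + ι R m * (c * a') + ι R m * (c * ι R m) * c' := by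
          noncomm_ring
      _ = a * a' + ι R m * (involute a * c' + c * a') := by
          rw [hc, ha, ← mul_assoc (ι R m) (ι R m), ι_sq_zero]; noncomm_ring

theorem mem_bot_of_contractLeft_coord_eq_zero {I : Type*} [DecidableEq I]
    (b : Module.Basis I R M) (S : Finset I) {x : ExteriorAlgebra R M}
    (hx : x ∈ Algebra.adjoin R (ι R '' (b '' S)))
    (h : ∀ i ∈ S, contractLeft (b.coord i) x = 0) : x ∈ (⊥ : Subalgebra R _) := by
  induction S using Finset.induction_on generalizing x with
  | empty => simpa using hx
  | @insert j T hj IH =>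
    rw [Finset.coe_insert, Set.image_insert_eq] at hx
    obtain ⟨a, ha, c, hc, rfl⟩ := exists_eq_add_ι_mul_of_mem_adjoin_insert hx
    have hcoord : ∀ m ∈ b '' T, b.coord j m = 0 := by
      rintro _ ⟨i, hi, rfl⟩
      rw [b.coord_apply, b.repr_self, Finsupp.single_eq_of_ne]
      rintro rfl; exact hj hi
    have hc0 : c = 0 := by
      have := h j (Finset.mem_insert_self j T)
      rwa [map_add, contractLeft_eq_zero_of_mem_adjoin hcoord ha, zero_add, contractLeft_ι_mul,
        contractLeft_eq_zero_of_mem_adjoin hcoord hc, mul_zero, sub_zero, b.coord_apply,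
        b.repr_self, Finsupp.single_eq_same, one_smul] at this
    rw [hc0, mul_zero, add_zero] at h ⊢
    exact IH ha fun i hi => h i (Finset.mem_insert_of_mem hi)

theorem mem_bot_of_forall_contractLeft_eq_zero [Module.Free R M] [Module.Finite R M]
    {x : ExteriorAlgebra R M} (h : ∀ d : Module.Dual R M, contractLeft d x = 0) :
    x ∈ (⊥ : Subalgebra R _) := by
  classical
  let b := Module.Free.chooseBasis R M
  refine mem_bot_of_contractLeft_coord_eq_zero b Finset.univ ?_ fun i _ => h (b.coord i)
  suffices Algebra.adjoin R (ι R '' Set.range b) = ⊤ by simp [this]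
  rw [eq_top_iff, ← CliffordAlgebra.adjoin_range_ι, Algebra.adjoin_le_iff]
  rintro _ ⟨m, rfl⟩
  apply Algebra.span_le_adjoin
  apply Submodule.apply_mem_span_image_of_mem_span
  rw [b.span_eq]; trivial

end ExteriorAlgebra

namespace CliffordAlgebra

section CommRing

variable {R M : Type*} [CommRing R] [AddCommGroup M] [Module R M] {Q : QuadraticForm R M}

theorem mem_bot_of_forall_contractLeft_eq_zero [Module.Free R M] [Module.Finite R M]
    {x : CliffordAlgebra Q} (h : ∀ d : Module.Dual R M, contractLeft d x = 0) :
    x ∈ (⊥ : Subalgebra R _) := by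
  obtain ⟨B, hB⟩ := LinearMap.BilinMap.toQuadraticMap_surjective Q
  have hB' : (-B).toQuadraticMap = 0 - Q := by
    rw [LinearMap.BilinMap.toQuadraticMap_neg, hB, zero_sub]
  obtain ⟨r, hr⟩ := Algebra.mem_bot.mp <|
    ExteriorAlgebra.mem_bot_of_forall_contractLeft_eq_zero (x := changeForm hB' x)
      fun d => by rw [← changeForm_contractLeft, h, map_zero]
  refine Algebra.mem_bot.mpr ⟨r, ?_⟩
  rw [← (changeFormEquiv hB').symm_apply_apply x, changeFormEquiv_symm, changeFormEquiv_apply,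
    changeFormEquiv_apply, ← hr, changeForm_algebraMap]

theorem commute_reverse_mul_self_ι {g : (CliffordAlgebra Q)ˣ}
    (hg : ∀ v, ∃ w, (g : CliffordAlgebra Q) * ι Q v * ↑g⁻¹ = ι Q w) (v : M) :
    Commute (reverse (g : CliffordAlgebra Q) * g) (ι Q v) := by
  have hrev : reverse (↑g⁻¹ : CliffordAlgebra Q) * ι Q v * reverse (g : CliffordAlgebra Q) =
      g * ι Q v * ↑g⁻¹ := by
    obtain ⟨w, hw⟩ := hg v
    have := congrArg reverse hw
    rw [reverse.map_mul, reverse.map_mul, reverse_ι, reverse_ι, ← mul_assoc] at this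
    exact this.trans hw.symm
  have hinv : reverse (g : CliffordAlgebra Q) * reverse (↑g⁻¹ : CliffordAlgebra Q) = 1 := by
    rw [← reverse.map_mul, g.inv_mul, reverse.map_one]
  calc reverse (g : CliffordAlgebra Q) * g * ι Q v
      = reverse (g : CliffordAlgebra Q) * (g * ι Q v * ↑g⁻¹) * g := by
        simp only [mul_assoc, Units.inv_mul, mul_one]
    _ = ι Q v * (reverse (g : CliffordAlgebra Q) * g) := by
        rw [← hrev]
        simp only [← mul_assoc, hinv, one_mul]

end CommRing

section Field

variable {k V : Type*} [Field k] [AddCommGroup V] [Module k V] [FiniteDimensional k V]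
  {Q : QuadraticForm k V}

theorem mem_bot_of_involute_eq_of_commute_ι
    (hQ : (QuadraticMap.polarBilin Q).Nondegenerate) {x : CliffordAlgebra Q}
    (hx : involute x = x) (hcomm : ∀ v, Commute x (ι Q v)) : x ∈ (⊥ : Subalgebra k _) := by
  refine mem_bot_of_forall_contractLeft_eq_zero fun d => ?_
  obtain ⟨v, rfl⟩ := (LinearMap.BilinForm.toDual (QuadraticMap.polarBilin Q) hQ).surjective d
  show contractLeft (QuadraticMap.polarBilin Q v) x = 0
  rw [← ι_mul_sub_involute_mul_ι, hx, (hcomm v).eq, sub_self]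

end Field

end CliffordAlgebra

theorem cspin_norm_scalar_general (k : Type*) [Field k]
    (V : Type*) [AddCommGroup V] [Module k V] [FiniteDimensional k V]
    (Q : QuadraticForm k V)
    (hQ : LinearMap.BilinForm.Nondegenerate (QuadraticMap.polarBilin Q))
    (g : (CliffordAlgebra Q)ˣ)
    (hg : (g : CliffordAlgebra Q) ∈ CliffordAlgebra.even Q)
    (hconj : ∀ v : V, ∃ w : V,
      (g : CliffordAlgebra Q) * CliffordAlgebra.ι Q v *
        ((g⁻¹ : (CliffordAlgebra Q)ˣ) : CliffordAlgebra Q) = CliffordAlgebra.ι Q w) :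
    ∃ c : k, CliffordAlgebra.reverse (Q := Q) (g : CliffordAlgebra Q) * (g : CliffordAlgebra Q) =
      algebraMap k (CliffordAlgebra Q) c := by
  have heven :
      CliffordAlgebra.reverse (g : CliffordAlgebra Q) * g ∈ CliffordAlgebra.evenOdd Q 0 :=
    zero_add (0 : ZMod 2) ▸
      SetLike.mul_mem_graded ((CliffordAlgebra.reverse_mem_evenOdd_iff Q).2 hg) hg
  obtain ⟨c, hc⟩ := Algebra.mem_bot.mp <|
    CliffordAlgebra.mem_bot_of_involute_eq_of_commute_ι hQ
      (CliffordAlgebra.involute_eq_of_mem_even heven)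
      (CliffordAlgebra.commute_reverse_mul_self_ι hconj)
  exact ⟨c, hc.symm⟩

/-- Over a field of characteristic ≠ 2, with `Q` a quadratic form with nondegenerate polar
form, for an even unit `g` of the Clifford algebra with `g ι(V) g⁻¹ ⊆ ι(V)`, the element
`reverse(g) * g` is a scalar.  This is the well-definedness of the norm map
`Nm : CSpin(V) → 𝔾ₘ`. -/
theorem cspin_norm_scalar (k : Type*) [Field k] (h2 : (2 : k) ≠ 0)
    (V : Type*) [AddCommGroup V] [Module k V] [FiniteDimensional k V]
    (Q : QuadraticForm k V)
    (hQ : LinearMap.BilinForm.Nondegenerate (QuadraticMap.polarBilin Q))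
    (g : (CliffordAlgebra Q)ˣ)
    (hg : (g : CliffordAlgebra Q) ∈ CliffordAlgebra.even Q)
    (hconj : ∀ v : V, ∃ w : V,
      (g : CliffordAlgebra Q) * CliffordAlgebra.ι Q v *
        ((g⁻¹ : (CliffordAlgebra Q)ˣ) : CliffordAlgebra Q) = CliffordAlgebra.ι Q w) :
    ∃ c : k, CliffordAlgebra.reverse (Q := Q) (g : CliffordAlgebra Q) * (g : CliffordAlgebra Q) =
      algebraMap k (CliffordAlgebra Q) c :=
  cspin_norm_scalar_general k V Q hQ g hg hconj
end

section
/- Let V be a finite-dimensional real vector space, ψ a symmetric bilinear form on V, Q the quadratic form Q(v) = ψ(v,v), and v₁, v₂ ∈ V with ψ(v₁,v₂) = 0. For a ∈ Cl(V,Q), let Tr(a) denote the trace of the ℝ-linear operator of left multiplication by a on Cl(V,Q). Then the bilinear pairing ⟨x,y⟩ := Tr(reverse(x)·y·ι(v₁)·ι(v₂)) on Cl(V,Q) is skew-symmetric: ⟨y,x⟩ = −⟨x,y⟩ for all x, y ∈ Cl(V,Q). -/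
/-!
Write `L_a`, `R_a` for left and right multiplication by `a`. Conjugating by `reverse` turns
`L_{reverse a}` into `R_a`, so `Tr L_{reverse a} = Tr R_a`. In a Clifford algebra moreover
`Tr L_a = Tr R_a`: for an orthogonal basis `e_i`, the functional `a ↦ Tr L_a - Tr R_a` vanishes at
`1` and is invariant under the automorphisms induced by the reflections `e_j ↦ -e_j`, and it kills
every monomial `e_{i₁} ⋯ e_{iₖ}`. Indeed, if the first index recurs, anticommuting the second
occurrence next to the first shortens the monomial by two, and otherwise the reflection in the
first index negates it.

With `c = reverse x * y` and `e_k = ι v_k` this gives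
`Tr L_{reverse (e₂ e₁ c)} = Tr L_{e₂ e₁ c} = Tr L_{c e₂ e₁} = -Tr L_{c e₁ e₂}`.
-/

open CliffordAlgebra LinearMap

section AlgebraTrace

variable {R A : Type*} [CommRing R] [Ring A] [Algebra R A]

theorem trace_mulLeft_mul_comm (a b : A) :
    trace R A (mulLeft R (a * b)) = trace R A (mulLeft R (b * a)) := by
  rw [mulLeft_mul, mulLeft_mul]
  exact trace_mul_comm R _ _

theorem trace_mulLeft_algEquiv (e : A ≃ₐ[R] A) (a : A) :
    trace R A (mulLeft R (e a)) = trace R A (mulLeft R a) := by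
  rw [← trace_conj' (mulLeft R a) e.toLinearEquiv]
  congr 1
  ext x
  simp

theorem trace_mulRight_algEquiv (e : A ≃ₐ[R] A) (a : A) :
    trace R A (mulRight R (e a)) = trace R A (mulRight R a) := by
  rw [← trace_conj' (mulRight R a) e.toLinearEquiv]
  congr 1
  ext x
  simp

end AlgebraTrace

section AnticommutingProducts

variable {A κ : Type*} [Ring A] {f : κ → A}

theorem exists_mul_list_prod_eq_units_smul (hf : Pairwise fun i j => f i * f j = -(f j * f i))
    (j : κ) (l : List κ) : ∃ ε : ℤˣ, f j * (l.map f).prod = ε • ((l.map f).prod * f j) := by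
  induction l with
  | nil => exact ⟨1, by simp⟩
  | cons i l ih =>
    obtain ⟨ε, hε⟩ := ih
    simp only [List.map_cons, List.prod_cons]
    by_cases hij : i = j
    · subst hij
      exact ⟨ε, by rw [mul_assoc, hε, mul_smul_comm, ← mul_assoc]⟩
    · refine ⟨-ε, ?_⟩
      rw [← mul_assoc, hf (Ne.symm hij), neg_mul, mul_assoc, hε, mul_smul_comm, Units.neg_smul,
        ← mul_assoc]

end AnticommutingProducts

namespace Module.Basis

variable {R M κ : Type*} [CommRing R] [AddCommGroup M] [Module R M] [DecidableEq κ]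

noncomputable def reflection (b : Basis κ R M) (j : κ) : M ≃ₗ[R] M :=
  b.equiv (b.unitsSMul fun i => if i = j then -1 else 1) (Equiv.refl κ)

theorem reflection_apply (b : Basis κ R M) (i j : κ) :
    b.reflection j (b i) = if i = j then -b i else b i := by
  simp only [reflection, equiv_apply, Equiv.refl_apply, unitsSMul_apply]
  split_ifs <;> simp

end Module.Basis

namespace QuadraticMap

variable {R M κ : Type*} [CommRing R] [Invertible (2 : R)] [AddCommGroup M] [Module R M]
  [DecidableEq κ] {Q : QuadraticForm R M} {b : Module.Basis κ R M}

theorem apply_basis_reflection (hb : (associated (R := R) Q).IsOrthoᵢ b) (j : κ) (v : M) :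
    Q (b.reflection j v) = Q v := by
  have h : (associated Q).compl₁₂ (b.reflection j : M →ₗ[R] M) (b.reflection j) =
      associated Q := by
    refine LinearMap.ext_basis b b fun i k => ?_
    simp only [compl₁₂_apply, LinearEquiv.coe_coe, Module.Basis.reflection_apply]
    by_cases hik : i = k
    · subst hik
      split_ifs <;> simp
    · split_ifs <;> simp [hb hik]
  rw [← associated_eq_self_apply R Q, ← associated_eq_self_apply R Q v]
  exact LinearMap.congr_fun₂ h v v

end QuadraticMap

namespace CliffordAlgebra

section CommRing

variable {R M : Type*} [CommRing R] [AddCommGroup M] [Module R M] {Q : QuadraticForm R M}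

theorem trace_mulLeft_reverse (a : CliffordAlgebra Q) :
    trace R _ (mulLeft R (reverse a)) = trace R _ (mulRight R a) := by
  rw [← trace_conj' (mulRight R a) reverseEquiv]
  congr 1
  ext x
  simp

theorem span_range_list_prod_ι_eq_top {κ : Type*} {f : κ → M}
    (hf : Submodule.span R (Set.range f) = ⊤) :
    Submodule.span R (Set.range fun l : List κ => (l.map (ι Q ∘ f)).prod) = ⊤ := by
  have hadjoin : Algebra.adjoin R (Set.range (ι Q ∘ f)) = ⊤ := by
    refine eq_top_iff.2 (adjoin_range_ι (Q := Q) ▸ Algebra.adjoin_le ?_)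
    rintro _ ⟨v, rfl⟩
    have hv : ι Q v ∈ (Submodule.span R (Set.range f)).map (ι Q) := ⟨v, by simp [hf]⟩
    rw [Submodule.map_span, ← Set.range_comp] at hv
    exact Algebra.span_le_adjoin R _ hv
  rw [eq_top_iff, ← Algebra.top_toSubmodule, ← hadjoin, Algebra.adjoin_eq_span,
    ← FreeMonoid.mrange_lift]
  refine Submodule.span_mono ?_
  rintro _ ⟨w, rfl⟩
  exact ⟨w.toList, (FreeMonoid.lift_apply _ _).symm⟩

end CommRing

section OrthogonalBasis

variable {R M κ : Type*} [CommRing R] [Invertible (2 : R)] [AddCommGroup M] [Module R M]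
  {Q : QuadraticForm R M} {b : Module.Basis κ R M}

theorem exists_list_prod_cons_append_cons (hb : (QuadraticMap.associated (R := R) Q).IsOrthoᵢ b)
    (j : κ) (s u : List κ) :
    ∃ ε : ℤˣ, ((j :: (s ++ j :: u)).map (ι Q ∘ b)).prod =
      ε • Q (b j) • ((s ++ u).map (ι Q ∘ b)).prod := by
  have hanti : Pairwise fun i k => (ι Q ∘ b) i * (ι Q ∘ b) k = -((ι Q ∘ b) k * (ι Q ∘ b) i) :=
    fun i k hik => ι_mul_ι_comm_of_isOrtho (QuadraticMap.associated_isOrtho.1 (hb hik))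
  obtain ⟨ε, hε⟩ := exists_mul_list_prod_eq_units_smul hanti j s
  refine ⟨ε, ?_⟩
  simp only [List.map_cons, List.map_append, List.prod_cons, List.prod_append]
  rw [← mul_assoc, hε, smul_mul_assoc, mul_assoc, ← mul_assoc ((ι Q ∘ b) j), Function.comp_apply,
    ι_sq_scalar, Algebra.algebraMap_eq_smul_one, smul_mul_assoc, one_mul, mul_smul_comm]

variable [DecidableEq κ]

noncomputable def reflectionAlgEquiv (hb : (QuadraticMap.associated (R := R) Q).IsOrthoᵢ b)
    (j : κ) : CliffordAlgebra Q ≃ₐ[R] CliffordAlgebra Q :=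
  equivOfIsometry { b.reflection j with map_app' := QuadraticMap.apply_basis_reflection hb j }

theorem reflectionAlgEquiv_ι (hb : (QuadraticMap.associated (R := R) Q).IsOrthoᵢ b) (i j : κ) :
    reflectionAlgEquiv hb j (ι Q (b i)) = if i = j then -ι Q (b i) else ι Q (b i) := by
  rw [reflectionAlgEquiv, equivOfIsometry_apply, map_apply_ι]
  change ι Q (b.reflection j (b i)) = _
  rw [Module.Basis.reflection_apply, apply_ite (ι Q), map_neg]

theorem reflectionAlgEquiv_list_prod_of_notMem
    (hb : (QuadraticMap.associated (R := R) Q).IsOrthoᵢ b) {j : κ} {l : List κ} (hj : j ∉ l) :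
    reflectionAlgEquiv hb j (l.map (ι Q ∘ b)).prod = (l.map (ι Q ∘ b)).prod := by
  rw [map_list_prod, List.map_map]
  congr 1
  refine List.map_congr_left fun i hi => ?_
  simp [reflectionAlgEquiv_ι hb, ne_of_mem_of_not_mem hi hj]

theorem apply_list_prod_eq_zero_of_forall_reflectionAlgEquiv
    (hb : (QuadraticMap.associated (R := R) Q).IsOrthoᵢ b) (φ : CliffordAlgebra Q →ₗ[R] R)
    (h1 : φ 1 = 0) (hφ : ∀ j x, φ (reflectionAlgEquiv hb j x) = φ x) :
    ∀ l : List κ, φ (l.map (ι Q ∘ b)).prod = 0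
  | [] => by simpa using h1
  | j :: t => by
    by_cases hj : j ∈ t
    · obtain ⟨s, u, rfl⟩ := List.append_of_mem hj
      obtain ⟨ε, hε⟩ := exists_list_prod_cons_append_cons hb j s u
      rw [hε, Units.smul_def, map_zsmul, map_smul,
        apply_list_prod_eq_zero_of_forall_reflectionAlgEquiv hb φ h1 hφ (s ++ u), smul_zero,
        smul_zero]
    · set x := ((j :: t).map (ι Q ∘ b)).prod
      have hflip : reflectionAlgEquiv hb j x = -x := by
        simp [x, reflectionAlgEquiv_ι hb, reflectionAlgEquiv_list_prod_of_notMem hb hj]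
      have hneg : -φ x = φ x := by rw [← map_neg, ← hflip, hφ]
      have h2 : (2 : R) * φ x = 0 := by
        rw [two_mul]
        nth_rw 1 [← hneg]
        exact neg_add_cancel _
      rw [← invOf_mul_cancel_left (2 : R) (φ x), h2, mul_zero]
termination_by l => l.length
decreasing_by subst_vars; simp

end OrthogonalBasis

theorem trace_mulLeft_eq_trace_mulRight {K V : Type*} [Field K] [Invertible (2 : K)]
    [AddCommGroup V] [Module K V] [FiniteDimensional K V] {Q : QuadraticForm K V}
    (a : CliffordAlgebra Q) : trace K _ (mulLeft K a) = trace K _ (mulRight K a) := by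
  classical
  obtain ⟨b, hb⟩ :=
    LinearMap.BilinForm.exists_orthogonal_basis (QuadraticForm.associated_isSymm K Q)
  let δ : CliffordAlgebra Q →ₗ[K] K := trace K _ ∘ₗ mul K _ - trace K _ ∘ₗ (mul K _).flip
  have hδ : ∀ z, δ z = trace K _ (mulLeft K z) - trace K _ (mulRight K z) := fun _ => rfl
  have hδ_one : δ 1 = 0 := by rw [hδ, mulLeft_one, mulRight_one, sub_self]
  have hδ_zero : δ = 0 := LinearMap.ext_on_range (span_range_list_prod_ι_eq_top b.span_eq) <|
    apply_list_prod_eq_zero_of_forall_reflectionAlgEquiv hb δ hδ_one fun j x => by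
      rw [hδ, hδ, trace_mulLeft_algEquiv, trace_mulRight_algEquiv]
  rw [← sub_eq_zero, ← hδ, hδ_zero, LinearMap.zero_apply]

end CliffordAlgebra

/-- The Kuga–Satake pairing `⟨x,y⟩ = Tr(reverse(x)·y·ι(v₁)·ι(v₂))` on the Clifford algebra is
skew-symmetric when `ψ(v₁,v₂) = 0`, where `Tr(a)` is the trace of left multiplication by `a`. -/
theorem kuga_satake_pairing_skew (V : Type*) [AddCommGroup V] [Module ℝ V]
    [FiniteDimensional ℝ V]
    (ψ : V →ₗ[ℝ] V →ₗ[ℝ] ℝ) (hsymm : ∀ u v : V, ψ u v = ψ v u)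
    (Q : QuadraticForm ℝ V) (hQ : ∀ v : V, Q v = ψ v v)
    (v₁ v₂ : V) (horth : ψ v₁ v₂ = 0)
    (x y : CliffordAlgebra Q) :
    LinearMap.trace ℝ (CliffordAlgebra Q)
        (LinearMap.mulLeft ℝ (CliffordAlgebra.reverse (Q := Q) y * x *
          CliffordAlgebra.ι Q v₁ * CliffordAlgebra.ι Q v₂)) =
      - LinearMap.trace ℝ (CliffordAlgebra Q)
        (LinearMap.mulLeft ℝ (CliffordAlgebra.reverse (Q := Q) x * y *
          CliffordAlgebra.ι Q v₁ * CliffordAlgebra.ι Q v₂)) := by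
  have hortho : Q.IsOrtho v₁ v₂ := by
    rw [QuadraticMap.isOrtho_def, hQ, hQ, hQ]
    simp only [map_add, LinearMap.add_apply, hsymm v₂ v₁, horth]
    ring
  set c := reverse x * y
  have hrev : reverse y * x * ι Q v₁ * ι Q v₂ = reverse (ι Q v₂ * ι Q v₁ * c) := by
    simp [c, mul_assoc]
  calc trace ℝ _ (mulLeft ℝ (reverse y * x * ι Q v₁ * ι Q v₂))
      = trace ℝ _ (mulLeft ℝ (ι Q v₂ * ι Q v₁ * c)) := by
        rw [hrev, trace_mulLeft_reverse, trace_mulLeft_eq_trace_mulRight]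
    _ = trace ℝ _ (mulLeft ℝ (c * (ι Q v₂ * ι Q v₁))) := trace_mulLeft_mul_comm _ _
    _ = -trace ℝ _ (mulLeft ℝ (reverse x * y * ι Q v₁ * ι Q v₂)) := by
        rw [ι_mul_ι_comm_of_isOrtho hortho.symm, mul_neg, ← mul_assoc,
          show mulLeft ℝ (-(c * ι Q v₁ * ι Q v₂)) = -mulLeft ℝ (c * ι Q v₁ * ι Q v₂) from
            ext fun _ => neg_mul _ _, map_neg]
end

section
/- Let V be a finite-dimensional complex vector space and Q a quadratic form on V whose polar form is nondegenerate. Let ω ∈ V be a nonzero vector with Q(ω) = 0. Then for every element a of the even Clifford algebra Cl₊(V,Q), one has ι(ω)·a = 0 if and only if there exists b ∈ Cl(V,Q) with a = ι(ω)·b. (That is, inside Cl₊(V,Q) the left annihilator of ι(ω) coincides with the intersection of the left ideal ι(ω)·Cl(V,Q) with Cl₊(V,Q).) -/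
/-!
Since `ι(ω)² = Q(ω) = 0`, every element of `ι(ω)·Cl(V,Q)` is killed by `ι(ω)`. Conversely, by
nondegeneracy there is `v` with `c := polar Q ω v ≠ 0`, and the anticommutation relation
`ι(ω)ι(v) + ι(v)ι(ω) = c` shows that if `ι(ω)·a = 0` then `c·a = ι(ω)·(ι(v)·a)`, so
`a = ι(ω)·(c⁻¹·ι(v)·a)`.
-/

namespace CliffordAlgebra

section CommRing

variable {R M : Type*} [CommRing R] [AddCommGroup M] [Module R M] {Q : QuadraticForm R M}

theorem ι_mul_ι_mul_of_isotropic {ω : M} (hω : Q ω = 0) (b : CliffordAlgebra Q) :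
    ι Q ω * (ι Q ω * b) = 0 := by
  rw [← mul_assoc, ι_sq_scalar, hω, map_zero, zero_mul]

theorem polar_smul_eq_ι_mul_ι_mul_of_ι_mul_eq_zero {ω : M} {a : CliffordAlgebra Q}
    (h : ι Q ω * a = 0) (v : M) :
    QuadraticMap.polar Q ω v • a = ι Q ω * (ι Q v * a) := by
  rw [Algebra.smul_def, ← ι_mul_ι_add_swap, add_mul, mul_assoc, mul_assoc, h, mul_zero, add_zero]

theorem exists_eq_ι_mul_of_ι_mul_eq_zero_of_isUnit_polar {ω v : M} {a : CliffordAlgebra Q}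
    (hv : IsUnit (QuadraticMap.polar Q ω v)) (h : ι Q ω * a = 0) :
    ∃ b, a = ι Q ω * b := by
  obtain ⟨c, hc⟩ := hv
  refine ⟨(↑c⁻¹ : R) • (ι Q v * a), ?_⟩
  rw [mul_smul_comm, ← polar_smul_eq_ι_mul_ι_mul_of_ι_mul_eq_zero h, ← hc, smul_smul,
    Units.inv_mul, one_smul]

end CommRing

theorem exists_eq_ι_mul_of_ι_mul_eq_zero {K V : Type*} [Field K] [AddCommGroup V] [Module K V]
    {Q : QuadraticForm K V} (hQ : (QuadraticMap.polarBilin Q).SeparatingLeft) {ω : V}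
    (hω : ω ≠ 0) {a : CliffordAlgebra Q} (h : ι Q ω * a = 0) :
    ∃ b, a = ι Q ω * b := by
  obtain ⟨v, hv⟩ : ∃ v, QuadraticMap.polar Q ω v ≠ 0 := by
    by_contra! hc
    exact hω (hQ ω hc)
  exact exists_eq_ι_mul_of_ι_mul_eq_zero_of_isUnit_polar hv.isUnit h

end CliffordAlgebra

theorem even_clifford_annihilator_general (V : Type*) [AddCommGroup V] [Module ℂ V]
    (Q : QuadraticForm ℂ V)
    (hQ : LinearMap.BilinForm.Nondegenerate (QuadraticMap.polarBilin Q))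
    (ω : V) (hω : ω ≠ 0) (hQω : Q ω = 0)
    (a : CliffordAlgebra Q) :
    CliffordAlgebra.ι Q ω * a = 0 ↔
      ∃ b : CliffordAlgebra Q, a = CliffordAlgebra.ι Q ω * b := by
  constructor
  · exact CliffordAlgebra.exists_eq_ι_mul_of_ι_mul_eq_zero hQ.1 hω
  · rintro ⟨b, rfl⟩
    exact CliffordAlgebra.ι_mul_ι_mul_of_isotropic hQω b

/-- For a nondegenerate quadratic form `Q` on a finite-dimensional complex vector space and a
nonzero isotropic vector `ω`, the left annihilator of `ι(ω)` inside the even Clifford algebra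
coincides with the intersection of the left ideal `ι(ω)·Cl(V,Q)` with the even part. -/
theorem even_clifford_annihilator (V : Type*) [AddCommGroup V] [Module ℂ V]
    [FiniteDimensional ℂ V]
    (Q : QuadraticForm ℂ V)
    (hQ : LinearMap.BilinForm.Nondegenerate (QuadraticMap.polarBilin Q))
    (ω : V) (hω : ω ≠ 0) (hQω : Q ω = 0)
    (a : CliffordAlgebra Q) (ha : a ∈ CliffordAlgebra.even Q) :
    CliffordAlgebra.ι Q ω * a = 0 ↔
      ∃ b : CliffordAlgebra Q, a = CliffordAlgebra.ι Q ω * b :=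
  even_clifford_annihilator_general V Q hQ ω hω hQω a
end

section
/- Let V be a finite-dimensional complex vector space and Q a quadratic form on V whose polar form is nondegenerate. Let ω ∈ V be a nonzero vector with Q(ω) = 0, and let v ∈ V with Q(v) ≠ 0. The assignment x ↦ ι(ω)·x·ι(v) defines a ℂ-linear endomorphism of the even Clifford algebra Cl₊(V,Q), and both its kernel and its image are equal to the subspace { a ∈ Cl₊(V,Q) | ι(ω)·a = 0 }. -/
/-!
Since `ι(v)² = Q(v) ≠ 0`, right multiplication by `ι(v)` is injective, which gives the kernel.
For the image, `ι(ω)² = Q(ω) = 0` puts it inside `{a | ι(ω)·a = 0}`; conversely, if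
`ι(ω)·c = 0`, the anticommutation relation `ι(ω)ι(u) + ι(u)ι(ω) = polar(ω, u)` gives
`ι(ω)·(ι(u)·c·ι(v))·ι(v) = polar(ω, u) Q(v) · c`, and nondegeneracy provides a `u` with
`polar(ω, u) ≠ 0`.
-/

open CliffordAlgebra QuadraticMap

namespace CliffordAlgebra

section CommRing

variable {R M : Type*} [CommRing R] [AddCommGroup M] [Module R M] {Q : QuadraticForm R M}

theorem ι_mul_mul_ι_mem_even {a : CliffordAlgebra Q} (ha : a ∈ even Q) (x y : M) :
    ι Q x * a * ι Q y ∈ even Q :=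
  (SetLike.mul_mem_graded (SetLike.mul_mem_graded (ι_mem_evenOdd_one Q x) ha)
    (ι_mem_evenOdd_one Q y) : _ ∈ evenOdd Q (1 + 0 + 1))

theorem mul_ι_eq_zero_iff {m : M} (hm : IsUnit (Q m)) {b : CliffordAlgebra Q} :
    b * ι Q m = 0 ↔ b = 0 :=
  (isUnit_ι_of_isUnit (Q := Q) hm).mul_left_eq_zero

theorem ι_mul_ι_mul_eq_zero {m : M} (hm : Q m = 0) (x : CliffordAlgebra Q) :
    ι Q m * (ι Q m * x) = 0 := by
  rw [← mul_assoc, ι_sq_scalar, hm, map_zero, zero_mul]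

theorem ι_mul_ι_mul_of_ι_mul_eq_zero {a : M} {c : CliffordAlgebra Q} (hc : ι Q a * c = 0)
    (b : M) : ι Q a * (ι Q b * c) = polar Q a b • c := by
  rw [← mul_assoc, ι_mul_ι_comm, sub_mul, mul_assoc, hc, mul_zero, sub_zero, Algebra.smul_def]

end CommRing

theorem exists_mem_even_ι_mul_mul_ι_eq {K M : Type*} [Field K] [AddCommGroup M] [Module K M]
    {Q : QuadraticForm K M} {ω u v : M} (hωu : polar Q ω u ≠ 0) (hv : Q v ≠ 0)
    {c : CliffordAlgebra Q} (hc : c ∈ even Q) (hωc : ι Q ω * c = 0) :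
    ∃ a ∈ even Q, ι Q ω * a * ι Q v = c := by
  refine ⟨(polar Q ω u * Q v)⁻¹ • (ι Q u * c * ι Q v),
    Submodule.smul_mem _ _ (ι_mul_mul_ι_mem_even hc u v), ?_⟩
  calc ι Q ω * ((polar Q ω u * Q v)⁻¹ • (ι Q u * c * ι Q v)) * ι Q v
      = (polar Q ω u * Q v)⁻¹ • (ι Q ω * (ι Q u * c) * (ι Q v * ι Q v)) := by
        simp only [mul_smul_comm, smul_mul_assoc, mul_assoc]
    _ = (polar Q ω u * Q v)⁻¹ • Q v • polar Q ω u • c := by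
        rw [ι_mul_ι_mul_of_ι_mul_eq_zero hωc, ι_sq_scalar, ← Algebra.commutes,
          ← Algebra.smul_def]
    _ = ((polar Q ω u * Q v)⁻¹ * (polar Q ω u * Q v)) • c := by
        simp only [smul_smul, mul_comm (Q v)]
    _ = c := by rw [inv_mul_cancel₀ (mul_ne_zero hωu hv), one_smul]

end CliffordAlgebra

theorem even_clifford_endo_kernel_image_general (V : Type*) [AddCommGroup V] [Module ℂ V]
    (Q : QuadraticForm ℂ V)
    (hQ : LinearMap.BilinForm.Nondegenerate (QuadraticMap.polarBilin Q))
    (ω : V) (hω : ω ≠ 0) (hQω : Q ω = 0)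
    (v : V) (hv : Q v ≠ 0) :
    (∀ a ∈ CliffordAlgebra.even Q,
        CliffordAlgebra.ι Q ω * a * CliffordAlgebra.ι Q v ∈ CliffordAlgebra.even Q) ∧
    (∀ a ∈ CliffordAlgebra.even Q,
        (CliffordAlgebra.ι Q ω * a * CliffordAlgebra.ι Q v = 0 ↔
          CliffordAlgebra.ι Q ω * a = 0)) ∧
    (∀ c ∈ CliffordAlgebra.even Q,
        ((∃ a ∈ CliffordAlgebra.even Q,
            CliffordAlgebra.ι Q ω * a * CliffordAlgebra.ι Q v = c) ↔
          CliffordAlgebra.ι Q ω * c = 0)) := by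
  obtain ⟨u, hu⟩ : ∃ u, polar Q ω u ≠ 0 := not_forall.mp (mt (hQ.1 ω) hω)
  refine ⟨fun a ha => ι_mul_mul_ι_mem_even ha ω v,
    fun a _ => mul_ι_eq_zero_iff (isUnit_iff_ne_zero.mpr hv),
    fun c hc => ⟨?_, exists_mem_even_ι_mul_mul_ι_eq hu hv hc⟩⟩
  rintro ⟨a, -, rfl⟩
  rw [mul_assoc, ι_mul_ι_mul_eq_zero hQω]

/-- For a nondegenerate quadratic form `Q` on a finite-dimensional complex vector space, a
nonzero isotropic vector `ω` and an anisotropic vector `v`, the map `x ↦ ι(ω)·x·ι(v)` is an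
endomorphism of the even Clifford algebra whose kernel and image are both equal to
`{a ∈ Cl₊(V,Q) | ι(ω)·a = 0}`. -/
theorem even_clifford_endo_kernel_image (V : Type*) [AddCommGroup V] [Module ℂ V]
    [FiniteDimensional ℂ V]
    (Q : QuadraticForm ℂ V)
    (hQ : LinearMap.BilinForm.Nondegenerate (QuadraticMap.polarBilin Q))
    (ω : V) (hω : ω ≠ 0) (hQω : Q ω = 0)
    (v : V) (hv : Q v ≠ 0) :
    (∀ a ∈ CliffordAlgebra.even Q,
        CliffordAlgebra.ι Q ω * a * CliffordAlgebra.ι Q v ∈ CliffordAlgebra.even Q) ∧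
    (∀ a ∈ CliffordAlgebra.even Q,
        (CliffordAlgebra.ι Q ω * a * CliffordAlgebra.ι Q v = 0 ↔
          CliffordAlgebra.ι Q ω * a = 0)) ∧
    (∀ c ∈ CliffordAlgebra.even Q,
        ((∃ a ∈ CliffordAlgebra.even Q,
            CliffordAlgebra.ι Q ω * a * CliffordAlgebra.ι Q v = c) ↔
          CliffordAlgebra.ι Q ω * c = 0)) :=
  even_clifford_endo_kernel_image_general V Q hQ ω hω hQω v hv
end

section
/- Let k be a field of characteristic ≠ 2, V a finite-dimensional k-vector space, and Q a quadratic form on V. Let ω, η, η₂ ∈ V be linearly independent vectors with Q(ω) = 0. Then ι(η)·ι(η₂) does not lie in the left ideal ι(ω)·Cl(V,Q); that is, there is no ξ ∈ Cl(V,Q) with ι(η)·ι(η₂) = ι(ω)·ξ. -/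
/-!
Choose a functional `d` with `d ω = 1` and `d η = d η₂ = 0`. Contraction by `d` obeys
`d⌋(ι a * b) = d a • b - ι a * (d⌋b)`, so it kills `ι η * ι η₂` and sends `ι ω * ξ` to
`ξ - ι ω * (d⌋ξ)`.
Hence `ξ ∈ ι ω * Cl`, and `ι ω * ξ ∈ ι ω ^ 2 * Cl = Q ω • Cl = 0`. But `ι η * ι η₂ ≠ 0`: two
further contractions, by functionals dual to `η` and `η₂`, turn it into `1`.
-/

open CliffordAlgebra Module

theorem LinearIndependent.exists_dual_apply_eq_single {ι K V : Type*} [Field K] [AddCommGroup V]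
    [Module K V] {v : ι → V} (hv : LinearIndependent K v) (i : ι) :
    ∃ f : Dual K V, ∀ j, f (v j) = Finsupp.single i 1 j := by
  obtain ⟨f, hf⟩ := LinearMap.exists_extend ((Finsupp.lapply i).comp hv.repr)
  refine ⟨f, fun j => ?_⟩
  let vj : Submodule.span K (Set.range v) := ⟨v j, Submodule.subset_span ⟨j, rfl⟩⟩
  have := LinearMap.congr_fun hf vj
  rw [LinearMap.comp_apply, LinearMap.comp_apply, hv.repr_eq_single j vj rfl] at this
  exact this.trans (by classical simp [Finsupp.single_apply, @eq_comm _ i j])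

namespace CliffordAlgebra

variable {R M : Type*} [CommRing R] [AddCommGroup M] [Module R M] {Q : QuadraticForm R M}

theorem contractLeft_ι_mul_ι_eq_zero {d : Dual R M} {x y : M} (hx : d x = 0) (hy : d y = 0) :
    contractLeft d (ι Q x * ι Q y) = 0 := by
  simp [contractLeft_ι_mul, hx, hy]

theorem ι_mul_eq_zero_of_contractLeft_eq_zero {d : Dual R M} {x : M} (hQ : Q x = 0)
    (hd : d x = 1) {ξ : CliffordAlgebra Q} (h : contractLeft d (ι Q x * ξ) = 0) :
    ι Q x * ξ = 0 := by
  have hξ : ξ = ι Q x * contractLeft d ξ := by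
    rw [contractLeft_ι_mul, hd, one_smul, sub_eq_zero] at h
    exact h
  rw [hξ, ← mul_assoc, ι_sq_scalar, hQ, map_zero, zero_mul]

theorem ι_mul_ι_ne_zero [Nontrivial (CliffordAlgebra Q)] {d d' : Dual R M} {x y : M}
    (hdx : d x = 1) (hdy : d y = 0) (hd'y : d' y = 1) : ι Q x * ι Q y ≠ 0 := by
  intro h
  have := congrArg (contractLeft d') (congrArg (contractLeft d) h)
  simp [contractLeft_ι_mul, hdx, hdy, hd'y] at this

end CliffordAlgebra

theorem clifford_not_divisible_general (k : Type*) [Field k] (h2 : (2 : k) ≠ 0)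
    (V : Type*) [AddCommGroup V] [Module k V]
    (Q : QuadraticForm k V)
    (ω η η₂ : V) (hind : LinearIndependent k ![ω, η, η₂]) (hQω : Q ω = 0) :
    ¬ ∃ ξ : CliffordAlgebra Q,
        CliffordAlgebra.ι Q η * CliffordAlgebra.ι Q η₂ = CliffordAlgebra.ι Q ω * ξ := by
  -- provides `Nontrivial (CliffordAlgebra Q)`, via the isomorphism with the exterior algebra
  have : Invertible (2 : k) := invertibleOfNonzero h2
  rintro ⟨ξ, hξ⟩
  obtain ⟨d, hd⟩ := hind.exists_dual_apply_eq_single 0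
  obtain ⟨dη, hdη⟩ := hind.exists_dual_apply_eq_single 1
  obtain ⟨dη₂, hdη₂⟩ := hind.exists_dual_apply_eq_single 2
  have hzero : ι Q ω * ξ = 0 :=
    ι_mul_eq_zero_of_contractLeft_eq_zero hQω (by simpa using hd 0)
      (hξ ▸ contractLeft_ι_mul_ι_eq_zero (by simpa using hd 1) (by simpa using hd 2))
  exact ι_mul_ι_ne_zero (by simpa using hdη 1) (by simpa using hdη 2) (by simpa using hdη₂ 2)
    (hξ.trans hzero)

/-- If `ω, η, η₂` are linearly independent with `Q(ω) = 0`, then `ι(η)·ι(η₂)` does not lie in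
the left ideal `ι(ω)·Cl(V,Q)`. -/
theorem clifford_not_divisible (k : Type*) [Field k] (h2 : (2 : k) ≠ 0)
    (V : Type*) [AddCommGroup V] [Module k V] [FiniteDimensional k V]
    (Q : QuadraticForm k V)
    (ω η η₂ : V) (hind : LinearIndependent k ![ω, η, η₂]) (hQω : Q ω = 0) :
    ¬ ∃ ξ : CliffordAlgebra Q,
        CliffordAlgebra.ι Q η * CliffordAlgebra.ι Q η₂ = CliffordAlgebra.ι Q ω * ξ :=
  clifford_not_divisible_general k h2 V Q ω η η₂ hind hQω
end

section
/- Let p be a prime, k an algebraically closed field of characteristic p, and W = W(k) the ring of p-typical Witt vectors of k. Let R be a commutative W-algebra such that: p is not a zero divisor in R; the k-algebra R/pR is reduced and finitely generated over k; and every k-algebra homomorphism R/pR → k lifts to a W-algebra homomorphism R → W. Let F ∈ R and r ∈ ℕ be such that for every W-algebra homomorphism φ : R → W, the element φ(F) is divisible by p^r in W. Then F is divisible by p^r in R. (Equivalently: an element f ∈ R[1/p] whose image under every W-point R → W lies in W must lie in R.) -/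
/-!
Induction on `r` reduces the claim to `r = 1`, because `W(k)` is a domain: if `F = p^r G` and
`p^(r+1)` divides every `φ F = p^r φ G`, then `p` divides every `φ G`. For `r = 1`, the image
of `F` in `R/pR` is killed by every `k`-point, since each `k`-point lifts to a `W`-point `φ` and
`p ∣ φ F` means `(φ F).coeff 0 = 0`. By the Nullstellensatz a function on a reduced affine
variety over `k = k̄` that vanishes at every point is zero, so `p ∣ F`.
-/

theorem Algebra.FiniteType.of_algebraMap_eq_comp {R S A : Type*} [CommRing R] [CommRing S]
    [CommRing A] [Algebra R A] [Algebra S A] [Algebra.FiniteType R A] (f : R →+* S)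
    (h : algebraMap R A = (algebraMap S A).comp f) : Algebra.FiniteType S A :=
  let := f.toAlgebra
  have : IsScalarTower R S A := .of_algebraMap_eq' h
  .of_restrictScalars_finiteType R S A

section AlgClosed

variable {k A : Type*} [Field k] [IsAlgClosed k] [CommRing A] [Algebra k A]
  [Algebra.FiniteType k A]

/-- Hilbert's Nullstellensatz: by Zariski's lemma `A ⧸ m` is a finite, hence trivial,
extension of the algebraically closed field `k`. -/
theorem Ideal.IsMaximal.exists_algHom_ker_eq {m : Ideal A} (hm : m.IsMaximal) :
    ∃ τ : A →ₐ[k] k, RingHom.ker τ = m := by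
  let := Ideal.Quotient.field m
  have := finite_of_finite_type_of_isJacobsonRing k (A ⧸ m)
  let ψ : k ≃ₐ[k] A ⧸ m := AlgEquiv.ofBijective (Algebra.ofId k (A ⧸ m))
    IsAlgClosed.algebraMap_bijective_of_isIntegral
  refine ⟨(ψ.symm : A ⧸ m →ₐ[k] k).comp (Ideal.Quotient.mkₐ k m), ?_⟩
  ext a
  simp [ψ, Ideal.Quotient.eq_zero_iff_mem]

theorem eq_zero_of_forall_algHom_eq_zero [IsReduced A] {a : A}
    (ha : ∀ τ : A →ₐ[k] k, τ a = 0) : a = 0 := by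
  have : IsJacobsonRing A := isJacobsonRing_of_finiteType (A := k)
  have ha_jacobson : a ∈ (⊥ : Ideal A).jacobson := Ideal.mem_sInf.mpr fun m ⟨_, hm⟩ => by
    obtain ⟨τ, hτ⟩ := hm.exists_algHom_ker_eq (k := k)
    rw [← hτ]
    exact ha τ
  rwa [← Ideal.radical_eq_jacobson, Ideal.radical_bot_of_isReduced] at ha_jacobson

end AlgClosed

theorem pow_dvd_of_forall_map_pow_dvd {R S F : Type*} [CommRing R] [CommRing S] [IsDomain S]
    [FunLike F R S] [RingHomClass F R S] {n : ℕ} (hn : (n : S) ≠ 0)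
    (h : ∀ x : R, (∀ φ : F, (n : S) ∣ φ x) → (n : R) ∣ x) (r : ℕ) {x : R}
    (hx : ∀ φ : F, (n : S) ^ r ∣ φ x) : (n : R) ^ r ∣ x := by
  induction r with
  | zero => simp
  | succ r ih =>
    obtain ⟨y, rfl⟩ := ih fun φ => (pow_dvd_pow _ r.le_succ).trans (hx φ)
    suffices hy : ∀ φ : F, (n : S) ∣ φ y by
      simpa [pow_succ] using mul_dvd_mul_left ((n : R) ^ r) (h y hy)
    intro φ
    have := hx φ
    rwa [map_mul, map_pow, map_natCast, pow_succ, mul_dvd_mul_iff_left (pow_ne_zero r hn)] at this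

theorem WittVector.coeff_zero_eq_zero_of_dvd {p : ℕ} [Fact p.Prime] {k : Type*} [CommRing k]
    [CharP k p] {w : WittVector p k} (hw : (p : WittVector p k) ∣ w) : w.coeff 0 = 0 := by
  obtain ⟨c, rfl⟩ := hw
  rw [mul_comm]
  exact mul_charP_coeff_zero c

theorem witt_divisibility_from_points_general (p : ℕ) [Fact p.Prime]
    (k : Type*) [Field k] [IsAlgClosed k] [CharP k p]
    (R : Type*) [CommRing R] [Algebra (WittVector p k) R]
    (hred : IsReduced (R ⧸ Ideal.span {(p : R)}))
    (hft : Algebra.FiniteType (WittVector p k) (R ⧸ Ideal.span {(p : R)}))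
    -- the `k`-algebra structure on `R/pR` induced by the `W`-algebra structure
    (σ : k →+* (R ⧸ Ideal.span {(p : R)}))
    (hσ : ∀ w : WittVector p k,
      algebraMap (WittVector p k) (R ⧸ Ideal.span {(p : R)}) w = σ (w.coeff 0))
    -- every `k`-algebra homomorphism `R/pR → k` lifts to a `W`-algebra homomorphism `R → W`
    (hlift : ∀ τ : (R ⧸ Ideal.span {(p : R)}) →+* k, (∀ c : k, τ (σ c) = c) →
      ∃ φ : R →ₐ[WittVector p k] WittVector p k,
        ∀ x : R, τ (Ideal.Quotient.mk (Ideal.span {(p : R)}) x) = (φ x).coeff 0)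
    (F : R) (r : ℕ)
    (hF : ∀ φ : R →ₐ[WittVector p k] WittVector p k, (p : WittVector p k) ^ r ∣ φ F) :
    (p : R) ^ r ∣ F := by
  let : Algebra k (R ⧸ Ideal.span {(p : R)}) := σ.toAlgebra
  have : Algebra.FiniteType k (R ⧸ Ideal.span {(p : R)}) :=
    .of_algebraMap_eq_comp (R := WittVector p k) WittVector.constantCoeff (RingHom.ext hσ)
  refine pow_dvd_of_forall_map_pow_dvd (WittVector.p_nonzero p k) (fun x hx => ?_) r hF
  rw [← Ideal.mem_span_singleton, ← Ideal.Quotient.eq_zero_iff_mem]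
  refine eq_zero_of_forall_algHom_eq_zero (k := k) fun τ => ?_
  obtain ⟨φ, hφ⟩ := hlift τ τ.commutes
  exact (hφ x).trans (WittVector.coeff_zero_eq_zero_of_dvd (hx φ))

/-- Integrality criterion over a smooth `p`-adic base (B. Conrad): let `W = W(k)` with `k`
algebraically closed of characteristic `p`, and let `R` be a `W`-algebra in which `p` is a
nonzerodivisor, with `R/pR` reduced and of finite type, such that every `k`-point of `R/pR`
lifts to a `W`-point of `R`.  If `F ∈ R` specializes to an element divisible by `p^r` under
every `W`-algebra homomorphism `R → W`, then `F` is divisible by `p^r` in `R`. -/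
theorem witt_divisibility_from_points (p : ℕ) [Fact p.Prime]
    (k : Type*) [Field k] [IsAlgClosed k] [CharP k p]
    (R : Type*) [CommRing R] [Algebra (WittVector p k) R]
    (hp : ∀ x : R, (p : R) * x = 0 → x = 0)
    (hred : IsReduced (R ⧸ Ideal.span {(p : R)}))
    (hft : Algebra.FiniteType (WittVector p k) (R ⧸ Ideal.span {(p : R)}))
    -- the `k`-algebra structure on `R/pR` induced by the `W`-algebra structure
    (σ : k →+* (R ⧸ Ideal.span {(p : R)}))
    (hσ : ∀ w : WittVector p k,
      algebraMap (WittVector p k) (R ⧸ Ideal.span {(p : R)}) w = σ (w.coeff 0))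
    -- every `k`-algebra homomorphism `R/pR → k` lifts to a `W`-algebra homomorphism `R → W`
    (hlift : ∀ τ : (R ⧸ Ideal.span {(p : R)}) →+* k, (∀ c : k, τ (σ c) = c) →
      ∃ φ : R →ₐ[WittVector p k] WittVector p k,
        ∀ x : R, τ (Ideal.Quotient.mk (Ideal.span {(p : R)}) x) = (φ x).coeff 0)
    (F : R) (r : ℕ)
    (hF : ∀ φ : R →ₐ[WittVector p k] WittVector p k, (p : WittVector p k) ^ r ∣ φ F) :
    (p : R) ^ r ∣ F :=
  witt_divisibility_from_points_general p k R hred hft σ hσ hlift F r hF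
end

section
/- Let R be a commutative ring in which 2 is invertible, M a free R-module, ψ a symmetric bilinear form on M, and Q the quadratic form Q(m) = ψ(m,m). Let π : T(M) → Cl(M,Q) be the canonical surjection from the tensor algebra to the Clifford algebra, and let T₂(M) ⊆ T(M) be the sum of the graded components of degrees 0, 1, and 2. Then the R-linear map β : M ⊗ M → T(M) defined by β(x⊗y) = x⊗y + y⊗x − 2ψ(x,y)·1 has image equal to ker(π) ∩ T₂(M) and kernel equal to the R-span of { x⊗y − y⊗x : x, y ∈ M }. In particular, β induces an isomorphism of the symmetric square Sym²(M) onto ker(π) ∩ T₂(M). -/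
/-!
Every element of `T₂(M)` is `r + m + t` with `t ∈ M ⊗ M`, and subtracting `β(t/2)` leaves an
element `r' + m + a` of `ker π` with `a` antisymmetric. Such an element vanishes: transported to
the exterior algebra by `CliffordAlgebra.equivExterior` (`2` is invertible), its components of
degrees 0, 1, 2 can be read off, the last one being `2a`. For the kernel, the degree-2 part of
`β z` is `z + z'`, with `z'` the swap of `z`, so `β z = 0` forces `z = (z - z')/2`.
-/

open scoped TensorProduct
open TensorProduct (comm)

section

variable {R M : Type*} [CommRing R] [AddCommGroup M] [Module R M]

lemma LinearMap.range_mul_range {A : Type*} [Ring A] [Algebra R A] (f g : M →ₗ[R] A) :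
    LinearMap.range f * LinearMap.range g =
      LinearMap.range (LinearMap.mul' R A ∘ₗ TensorProduct.map f g) := by
  apply le_antisymm
  · rw [Submodule.mul_le]
    rintro _ ⟨x, rfl⟩ _ ⟨y, rfl⟩
    exact ⟨x ⊗ₜ y, by simp⟩
  · rintro _ ⟨t, rfl⟩
    induction t using TensorProduct.induction_on with
    | zero => simp
    | tmul x y => simpa using Submodule.mul_mem_mul (mem_range_self f x) (mem_range_self g y)
    | add x y hx hy => rw [map_add]; exact add_mem hx hy

lemma AlgHom.map_mul'_map {A B : Type*} [Ring A] [Ring B] [Algebra R A] [Algebra R B]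
    (φ : A →ₐ[R] B) (f g : M →ₗ[R] A) (t : M ⊗[R] M) :
    φ (LinearMap.mul' R A (TensorProduct.map f g t)) =
      LinearMap.mul' R B (TensorProduct.map (φ.toLinearMap ∘ₗ f) (φ.toLinearMap ∘ₗ g) t) := by
  induction t using TensorProduct.induction_on with
  | zero => simp
  | tmul x y => simp
  | add x y hx hy => simp only [map_add, hx, hy]

lemma TensorProduct.sub_comm_mem_span (t : M ⊗[R] M) :
    t - comm R M M t ∈
      Submodule.span R {z : M ⊗[R] M | ∃ x y : M, z = x ⊗ₜ[R] y - y ⊗ₜ[R] x} := by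
  induction t using TensorProduct.induction_on with
  | zero => simp
  | tmul x y => exact Submodule.subset_span ⟨x, y, rfl⟩
  | add x y hx hy => simpa only [map_add, add_sub_add_comm] using add_mem hx hy

lemma TensorProduct.mem_span_of_comm_eq_neg [Invertible (2 : R)] {t : M ⊗[R] M}
    (ht : comm R M M t = -t) :
    t ∈ Submodule.span R {z : M ⊗[R] M | ∃ x y : M, z = x ⊗ₜ[R] y - y ⊗ₜ[R] x} := by
  have : t = ⅟(2 : R) • (t - comm R M M t) := by
    rw [ht, sub_neg_eq_add, ← two_smul R, invOf_smul_smul]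
  rw [this]
  exact Submodule.smul_mem _ _ (sub_comm_mem_span t)

end

section LowDegree

variable {R M N : Type*} [CommRing R] [AddCommGroup M] [Module R M] [AddCommGroup N] [Module R N]

/-- Left multiplication by `m` on the truncation `R × M × N` of a graded algebra to degrees
`≤ 2`, with `g` playing the role of the product of two degree-one elements. -/
def lowDegreeAction (g : M →ₗ[R] M →ₗ[R] N) : M →ₗ[R] Module.End R (R × M × N) :=
  LinearMap.mk₂ R (fun m v => ((0 : R), v.1 • m, g m v.2.1))
    (fun m m' v => by simp [smul_add])
    (fun c m v => by simp [smul_comm c v.1 m])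
    (fun m v w => by simp [add_smul])
    (fun c m v => by simp [smul_smul])

@[simp] lemma lowDegreeAction_apply (g : M →ₗ[R] M →ₗ[R] N) (m : M) (v : R × M × N) :
    lowDegreeAction g m v = ((0 : R), v.1 • m, g m v.2.1) := rfl

lemma lowDegreeAction_mul_self {g : M →ₗ[R] M →ₗ[R] N} (hg : ∀ m, g m m = 0) (m : M) :
    lowDegreeAction g m * lowDegreeAction g m = 0 := by
  ext v <;> simp [hg]

variable {A : Type*} [Ring A] [Algebra R A] {g : M →ₗ[R] M →ₗ[R] N} {f : M →ₗ[R] A}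
  {Φ : A →ₐ[R] Module.End R (R × M × N)}

lemma apply_mul'_map_apply_one (hΦ : ∀ m, Φ (f m) = lowDegreeAction g m) (t : M ⊗[R] M) :
    Φ (LinearMap.mul' R A (TensorProduct.map f f t)) (1, 0, 0) =
      (0, 0, TensorProduct.lift g t) := by
  induction t using TensorProduct.induction_on with
  | zero => simp [Prod.zero_eq_mk]
  | tmul x y => simp [hΦ]
  | add x y hx hy => simp [hx, hy]

lemma eq_zero_of_algebraMap_add_add_mul'_map_eq_zero (hΦ : ∀ m, Φ (f m) = lowDegreeAction g m)
    {r : R} {m : M} {t : M ⊗[R] M}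
    (h : algebraMap R A r + f m + LinearMap.mul' R A (TensorProduct.map f f t) = 0) :
    r = 0 ∧ m = 0 ∧ TensorProduct.lift g t = 0 := by
  have := congr(Φ $h (1, 0, 0))
  simpa [apply_mul'_map_apply_one hΦ, hΦ, Algebra.algebraMap_eq_smul_one, Prod.zero_eq_mk] using this

end LowDegree

section

variable {R M : Type*} [CommRing R] [AddCommGroup M] [Module R M]

lemma TensorAlgebra.eq_zero_of_algebraMap_add_ι_add_mul'_map_eq_zero {r : R} {m : M}
    {t : M ⊗[R] M} (h : algebraMap R _ r + ι R m +
      LinearMap.mul' R _ (TensorProduct.map (ι R) (ι R) t) = 0) :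
    r = 0 ∧ m = 0 ∧ t = 0 := by
  simpa [TensorProduct.lift_mk] using eq_zero_of_algebraMap_add_add_mul'_map_eq_zero
    (Φ := lift R (lowDegreeAction (TensorProduct.mk R M M))) (lift_ι_apply _) h

lemma ExteriorAlgebra.eq_zero_of_algebraMap_add_ι_add_mul'_map_eq_zero {r : R} {m : M}
    {t : M ⊗[R] M} (h : algebraMap R _ r + ι R m +
      LinearMap.mul' R _ (TensorProduct.map (ι R) (ι R) t) = 0) :
    r = 0 ∧ m = 0 ∧ t = comm R M M t := by
  have hg : ∀ m : M, (TensorProduct.mk R M M - (TensorProduct.mk R M M).flip) m m = 0 := by simp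
  have := eq_zero_of_algebraMap_add_add_mul'_map_eq_zero
    (Φ := lift R ⟨_, lowDegreeAction_mul_self hg⟩) (lift_ι_apply R _ _) h
  have hlift : TensorProduct.lift (TensorProduct.mk R M M - (TensorProduct.mk R M M).flip) =
      LinearMap.id - (comm R M M).toLinearMap := TensorProduct.ext' fun _ _ => rfl
  simpa [hlift, sub_eq_zero] using this

lemma CliffordAlgebra.equivExterior_mul'_map [Invertible (2 : R)] (Q : QuadraticForm R M)
    (t : M ⊗[R] M) :
    equivExterior Q (LinearMap.mul' R _ (TensorProduct.map (ι Q) (ι Q) t)) =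
      LinearMap.mul' R _ (TensorProduct.map (ExteriorAlgebra.ι R) (ExteriorAlgebra.ι R) t) +
        algebraMap R _ (TensorProduct.lift (QuadraticMap.associated Q) t) := by
  induction t using TensorProduct.induction_on with
  | zero => simp
  | tmul x y => simp [changeForm_ι_mul_ι]
  | add x y hx hy => simp only [map_add, hx, hy]; abel

lemma CliffordAlgebra.eq_zero_of_algebraMap_add_ι_add_mul'_map_eq_zero [Invertible (2 : R)]
    {Q : QuadraticForm R M} {r : R} {m : M} {a : M ⊗[R] M} (ha : comm R M M a = -a)
    (h : algebraMap R _ r + ι Q m + LinearMap.mul' R _ (TensorProduct.map (ι Q) (ι Q) a) = 0) :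
    r = 0 ∧ m = 0 ∧ a = 0 := by
  have h' : algebraMap R _ (r + TensorProduct.lift (QuadraticMap.associated Q) a) +
      ExteriorAlgebra.ι R m +
      LinearMap.mul' R _ (TensorProduct.map (ExteriorAlgebra.ι R) (ExteriorAlgebra.ι R) a) = 0 := by
    have := congr(equivExterior Q $h)
    rw [map_add, map_add, equivExterior_mul'_map, map_zero] at this
    simp only [equivExterior, changeFormEquiv_apply, changeForm_algebraMap, changeForm_ι] at this
    rw [← this, map_add]
    abel
  obtain ⟨hr, rfl, ha'⟩ := ExteriorAlgebra.eq_zero_of_algebraMap_add_ι_add_mul'_map_eq_zero h'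
  have ha0 : a = 0 := by
    rw [ha, eq_neg_iff_add_eq_zero, ← two_smul R] at ha'
    simpa using congr(⅟(2 : R) • $ha')
  subst ha0
  simpa using hr

lemma TensorAlgebra.mem_range_ι_pow_sup_iff {u : TensorAlgebra R M} :
    u ∈ LinearMap.range (ι R : M →ₗ[R] TensorAlgebra R M) ^ 0 ⊔
      LinearMap.range (ι R : M →ₗ[R] TensorAlgebra R M) ^ 1 ⊔
      LinearMap.range (ι R : M →ₗ[R] TensorAlgebra R M) ^ 2 ↔
    ∃ (r : R) (m : M) (t : M ⊗[R] M),
      algebraMap R _ r + ι R m + LinearMap.mul' R _ (TensorProduct.map (ι R) (ι R) t) = u := by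
  simp only [pow_zero, pow_one, pow_two, LinearMap.range_mul_range, Submodule.one_eq_range,
    Submodule.mem_sup, LinearMap.mem_range]
  constructor
  · rintro ⟨_, ⟨_, ⟨r, rfl⟩, _, ⟨m, rfl⟩, rfl⟩, _, ⟨t, rfl⟩, rfl⟩
    exact ⟨r, m, t, rfl⟩
  · rintro ⟨r, m, t, rfl⟩
    exact ⟨_, ⟨_, ⟨r, rfl⟩, _, ⟨m, rfl⟩, rfl⟩, _, ⟨t, rfl⟩, rfl⟩

namespace CliffordAlgebra

noncomputable def polarRelation (Q : QuadraticForm R M) : M ⊗[R] M →ₗ[R] TensorAlgebra R M :=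
  LinearMap.mul' R _ ∘ₗ TensorProduct.map (TensorAlgebra.ι R) (TensorAlgebra.ι R) ∘ₗ
      (LinearMap.id + (comm R M M).toLinearMap) -
    (TensorProduct.lift (QuadraticMap.polarBilin Q)).smulRight 1

variable (Q : QuadraticForm R M)

lemma polarRelation_apply (t : M ⊗[R] M) :
    polarRelation Q t =
      LinearMap.mul' R _ (TensorProduct.map (TensorAlgebra.ι R) (TensorAlgebra.ι R)
        (t + comm R M M t)) - TensorProduct.lift (QuadraticMap.polarBilin Q) t • 1 := rfl

@[simp] lemma polarRelation_tmul (x y : M) :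
    polarRelation Q (x ⊗ₜ y) = TensorAlgebra.ι R x * TensorAlgebra.ι R y +
      TensorAlgebra.ι R y * TensorAlgebra.ι R x - QuadraticMap.polar Q x y • 1 := by
  simp [polarRelation_apply]

lemma lift_ι_polarRelation (t : M ⊗[R] M) :
    TensorAlgebra.lift R (ι Q) (polarRelation Q t) = 0 := by
  induction t using TensorProduct.induction_on with
  | zero => simp
  | tmul x y => simp [ι_mul_ι_add_swap, Algebra.algebraMap_eq_smul_one]
  | add x y hx hy => rw [map_add, map_add, hx, hy, add_zero]

lemma polarRelation_mem_range_ι_pow_sup (t : M ⊗[R] M) :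
    polarRelation Q t ∈ LinearMap.range (TensorAlgebra.ι R : M →ₗ[R] TensorAlgebra R M) ^ 0 ⊔
      LinearMap.range (TensorAlgebra.ι R : M →ₗ[R] TensorAlgebra R M) ^ 1 ⊔
      LinearMap.range (TensorAlgebra.ι R : M →ₗ[R] TensorAlgebra R M) ^ 2 :=
  TensorAlgebra.mem_range_ι_pow_sup_iff.mpr
    ⟨-TensorProduct.lift (QuadraticMap.polarBilin Q) t, 0, t + comm R M M t, by
      rw [polarRelation_apply, map_zero, add_zero, Algebra.algebraMap_eq_smul_one, neg_smul,
        neg_add_eq_sub]⟩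

lemma ker_polarRelation [Invertible (2 : R)] :
    LinearMap.ker (polarRelation Q) =
      Submodule.span R {z : M ⊗[R] M | ∃ x y : M, z = x ⊗ₜ[R] y - y ⊗ₜ[R] x} := by
  apply le_antisymm
  · intro t ht
    have h : algebraMap R _ (-TensorProduct.lift (QuadraticMap.polarBilin Q) t) +
        TensorAlgebra.ι R 0 + LinearMap.mul' R _
          (TensorProduct.map (TensorAlgebra.ι R) (TensorAlgebra.ι R) (t + comm R M M t)) = 0 := by
      rw [← ht, polarRelation_apply, map_zero, add_zero, Algebra.algebraMap_eq_smul_one,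
        neg_smul, neg_add_eq_sub]
    obtain ⟨-, -, hsum⟩ := TensorAlgebra.eq_zero_of_algebraMap_add_ι_add_mul'_map_eq_zero h
    exact TensorProduct.mem_span_of_comm_eq_neg (eq_neg_of_add_eq_zero_right hsum)
  · rw [Submodule.span_le]
    rintro _ ⟨x, y, rfl⟩
    simp [QuadraticMap.polar_comm Q y x, add_comm]

lemma range_polarRelation [Invertible (2 : R)] :
    LinearMap.range (polarRelation Q) =
      LinearMap.ker (TensorAlgebra.lift R (ι Q)).toLinearMap ⊓
        (LinearMap.range (TensorAlgebra.ι R : M →ₗ[R] TensorAlgebra R M) ^ 0 ⊔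
          LinearMap.range (TensorAlgebra.ι R : M →ₗ[R] TensorAlgebra R M) ^ 1 ⊔
          LinearMap.range (TensorAlgebra.ι R : M →ₗ[R] TensorAlgebra R M) ^ 2) := by
  apply le_antisymm
  · rintro _ ⟨t, rfl⟩
    exact ⟨lift_ι_polarRelation Q t, polarRelation_mem_range_ι_pow_sup Q t⟩
  · rintro u ⟨hu, hu₂⟩
    replace hu : TensorAlgebra.lift R (ι Q) u = 0 := hu
    obtain ⟨r, m, t, rfl⟩ := TensorAlgebra.mem_range_ι_pow_sup_iff.mp hu₂
    set a := ⅟(2 : R) • (t - comm R M M t)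
    have hdiff : algebraMap R _ r + TensorAlgebra.ι R m +
          LinearMap.mul' R _ (TensorProduct.map (TensorAlgebra.ι R) (TensorAlgebra.ι R) t) -
        polarRelation Q (⅟(2 : R) • t) =
        algebraMap R _ (r + ⅟(2 : R) * TensorProduct.lift (QuadraticMap.polarBilin Q) t) +
          TensorAlgebra.ι R m +
          LinearMap.mul' R _ (TensorProduct.map (TensorAlgebra.ι R) (TensorAlgebra.ι R) a) := by
      have h2 : (⅟(2 : R) + ⅟(2 : R)) = 1 := by rw [← two_mul, mul_invOf_self]
      simp only [a, polarRelation_apply, map_smul, map_add, map_sub,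
        Algebra.algebraMap_eq_smul_one]
      linear_combination (norm := module)
        h2.symm • LinearMap.mul' R _ (TensorProduct.map (TensorAlgebra.ι R) (TensorAlgebra.ι R) t)
    have hcl : algebraMap R _ (r + ⅟(2 : R) * TensorProduct.lift (QuadraticMap.polarBilin Q) t) +
        ι Q m + LinearMap.mul' R _ (TensorProduct.map (ι Q) (ι Q) a) = 0 := by
      have := congr(TensorAlgebra.lift R (ι Q) $hdiff)
      rw [map_sub, hu, lift_ι_polarRelation, sub_zero] at this
      simpa [AlgHom.map_mul'_map] using this.symm
    have ha : comm R M M a = -a := by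
      simp only [a, map_smul, map_sub, TensorProduct.comm_comm, ← smul_neg, neg_sub]
    obtain ⟨hr, rfl, ha0⟩ := eq_zero_of_algebraMap_add_ι_add_mul'_map_eq_zero ha hcl
    refine ⟨⅟(2 : R) • t, (sub_eq_zero.mp ?_).symm⟩
    rw [hdiff, hr, ha0]
    simp

end CliffordAlgebra

end

theorem sym_sq_iso_clifford_relations_general (R : Type*) [CommRing R] [Invertible (2 : R)]
    (M : Type*) [AddCommGroup M] [Module R M]
    (ψ : M →ₗ[R] M →ₗ[R] R) (hsymm : ∀ x y : M, ψ x y = ψ y x)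
    (Q : QuadraticForm R M) (hQ : ∀ m : M, Q m = ψ m m)
    (π : TensorAlgebra R M →ₐ[R] CliffordAlgebra Q)
    (hπ : π = RingCon.mkₐ R (CliffordAlgebra.ringCon Q))
    (T₂ : Submodule R (TensorAlgebra R M))
    (hT₂ : T₂ =
      (LinearMap.range (TensorAlgebra.ι R : M →ₗ[R] TensorAlgebra R M)) ^ 0 ⊔
      (LinearMap.range (TensorAlgebra.ι R : M →ₗ[R] TensorAlgebra R M)) ^ 1 ⊔
      (LinearMap.range (TensorAlgebra.ι R : M →ₗ[R] TensorAlgebra R M)) ^ 2)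
    (β : M ⊗[R] M →ₗ[R] TensorAlgebra R M)
    (hβ : ∀ x y : M, β (x ⊗ₜ[R] y) =
      TensorAlgebra.ι R x * TensorAlgebra.ι R y + TensorAlgebra.ι R y * TensorAlgebra.ι R x -
        (2 * ψ x y) • (1 : TensorAlgebra R M)) :
    LinearMap.range β = LinearMap.ker π.toLinearMap ⊓ T₂ ∧
    LinearMap.ker β =
      Submodule.span R {z : M ⊗[R] M | ∃ x y : M, z = x ⊗ₜ[R] y - y ⊗ₜ[R] x} ∧
    Nonempty (((M ⊗[R] M) ⧸
        Submodule.span R {z : M ⊗[R] M | ∃ x y : M, z = x ⊗ₜ[R] y - y ⊗ₜ[R] x}) ≃ₗ[R]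
      ↥(LinearMap.ker π.toLinearMap ⊓ T₂)) := by
  obtain rfl : π = TensorAlgebra.lift R (CliffordAlgebra.ι Q) := by
    rw [hπ]
    ext m
    exact (TensorAlgebra.lift_ι_apply _ m).symm
  obtain rfl : β = CliffordAlgebra.polarRelation Q := by
    refine TensorProduct.ext' fun x y => ?_
    have hpolar : QuadraticMap.polar Q x y = 2 * ψ x y := by
      simp only [QuadraticMap.polar, hQ, map_add, LinearMap.add_apply, hsymm y x]
      ring
    rw [hβ, CliffordAlgebra.polarRelation_tmul, hpolar]
  subst hT₂
  have hrange := CliffordAlgebra.range_polarRelation Q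
  have hker := CliffordAlgebra.ker_polarRelation Q
  exact ⟨hrange, hker, ⟨(Submodule.quotEquivOfEq _ _ hker.symm).trans
    ((CliffordAlgebra.polarRelation Q).quotKerEquivRange.trans (LinearEquiv.ofEq _ _ hrange))⟩⟩

/-- (Snowden's appendix.)  For `2` invertible, the map `β(x⊗y) = x⊗y + y⊗x − 2ψ(x,y)·1` from
`M ⊗ M` to the tensor algebra has image `ker(π) ∩ T₂(M)` (where `π : T(M) → Cl(M,Q)` is the
canonical surjection and `T₂(M)` the sum of the components of degrees ≤ 2) and kernel the
span of the commutators `x⊗y − y⊗x`; hence it induces an isomorphism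
`Sym²(M) ≅ ker(π) ∩ T₂(M)`. -/
theorem sym_sq_iso_clifford_relations (R : Type*) [CommRing R] [Invertible (2 : R)]
    (M : Type*) [AddCommGroup M] [Module R M] [Module.Free R M]
    (ψ : M →ₗ[R] M →ₗ[R] R) (hsymm : ∀ x y : M, ψ x y = ψ y x)
    (Q : QuadraticForm R M) (hQ : ∀ m : M, Q m = ψ m m)
    (π : TensorAlgebra R M →ₐ[R] CliffordAlgebra Q)
    (hπ : π = RingCon.mkₐ R (CliffordAlgebra.ringCon Q))
    (T₂ : Submodule R (TensorAlgebra R M))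
    (hT₂ : T₂ =
      (LinearMap.range (TensorAlgebra.ι R : M →ₗ[R] TensorAlgebra R M)) ^ 0 ⊔
      (LinearMap.range (TensorAlgebra.ι R : M →ₗ[R] TensorAlgebra R M)) ^ 1 ⊔
      (LinearMap.range (TensorAlgebra.ι R : M →ₗ[R] TensorAlgebra R M)) ^ 2)
    (β : M ⊗[R] M →ₗ[R] TensorAlgebra R M)
    (hβ : ∀ x y : M, β (x ⊗ₜ[R] y) =
      TensorAlgebra.ι R x * TensorAlgebra.ι R y + TensorAlgebra.ι R y * TensorAlgebra.ι R x -
        (2 * ψ x y) • (1 : TensorAlgebra R M)) :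
    LinearMap.range β = LinearMap.ker π.toLinearMap ⊓ T₂ ∧
    LinearMap.ker β =
      Submodule.span R {z : M ⊗[R] M | ∃ x y : M, z = x ⊗ₜ[R] y - y ⊗ₜ[R] x} ∧
    Nonempty (((M ⊗[R] M) ⧸
        Submodule.span R {z : M ⊗[R] M | ∃ x y : M, z = x ⊗ₜ[R] y - y ⊗ₜ[R] x}) ≃ₗ[R]
      ↥(LinearMap.ker π.toLinearMap ⊓ T₂)) :=
  sym_sq_iso_clifford_relations_general R M ψ hsymm Q hQ π hπ T₂ hT₂ β hβ
end
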